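/- arXiv:1402.6948 — 4 statements merged into one kernel-verified Lean document; each statement's English description precedes it below -/
import Mathlib

section
/- For all real numbers a, b > 0 and q > 1, one has (a^{q/2} - b^{q/2})^2 ≤ (q^2/(4(q-1))) · (a^{q-1} - b^{q-1}) · (a - b). -/
/-! Both differences are integrals of powers over the interval between `b` and `a`:
`a^{q/2} - b^{q/2} = (q/2) ∫ t^{q/2-1}` and `a^{q-1} - b^{q-1} = (q-1) ∫ t^{q-2}`, and the integrand
of the second is the square of that of the first, so the inequality is Cauchy–Schwarz
`(∫ g)² ≤ (a - b) ∫ g²` for `g t = t^{q/2-1}`. -/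

open MeasureTheory Set

namespace intervalIntegral

theorem sq_integral_le_of_le {f : ℝ → ℝ} {a b : ℝ} (hab : a ≤ b)
    (hf : IntervalIntegrable f volume a b) (hf2 : IntervalIntegrable (fun x => f x ^ 2) volume a b) :
    (∫ x in a..b, f x) ^ 2 ≤ (b - a) * ∫ x in a..b, f x ^ 2 := by
  rcases hab.eq_or_lt with rfl | hab
  · simp
  have hL : 0 < b - a := sub_pos.mpr hab
  have hjensen := (even_two.convexOn_pow : ConvexOn ℝ univ (· ^ 2)).map_set_average_le
    (continuous_pow 2).continuousOn isClosed_univ (by simpa using hab) (by simp)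
    (by simp) hf.1 hf2.1
  simp only [setAverage_eq, Real.volume_real_Ioc_of_le hab.le, smul_eq_mul,
    ← integral_of_le hab.le] at hjensen
  rw [mul_pow, inv_pow, ← div_eq_inv_mul, ← div_eq_inv_mul,
    div_le_div_iff₀ (by positivity) hL] at hjensen
  nlinarith

theorem sq_integral_le {f : ℝ → ℝ} {a b : ℝ}
    (hf : IntervalIntegrable f volume a b) (hf2 : IntervalIntegrable (fun x => f x ^ 2) volume a b) :
    (∫ x in a..b, f x) ^ 2 ≤ (b - a) * ∫ x in a..b, f x ^ 2 := by
  rcases le_total a b with hab | hba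
  · exact sq_integral_le_of_le hab hf hf2
  · have := sq_integral_le_of_le hba hf.symm hf2.symm
    rw [integral_symm a b, integral_symm a b, neg_sq] at this
    linarith

end intervalIntegral

open intervalIntegral in
/-- For all real `a, b > 0` and `q > 1`,
`(a^{q/2} - b^{q/2})² ≤ (q²/(4(q-1))) · (a^{q-1} - b^{q-1}) · (a - b)`. -/
theorem power_mean_inequality (a b q : ℝ) (ha : 0 < a) (hb : 0 < b) (hq : 1 < q) :
    (a ^ (q / 2) - b ^ (q / 2)) ^ 2 ≤
      q ^ 2 / (4 * (q - 1)) * ((a ^ (q - 1) - b ^ (q - 1)) * (a - b)) := by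
  have hpos : ∀ t ∈ uIcc b a, 0 < t := fun t ht => (lt_min hb ha).trans_le ht.1
  have hcont : ContinuousOn (fun t : ℝ => t ^ (q / 2 - 1)) (uIcc b a) :=
    continuousOn_id.rpow_const fun t ht => Or.inl (hpos t ht).ne'
  have hsq : EqOn (fun t : ℝ => (t ^ (q / 2 - 1)) ^ 2) (fun t => t ^ (q - 2)) (uIcc b a) :=
    fun t ht => by
      simp only [← Real.rpow_mul_natCast (hpos t ht).le]
      ring_nf
  have hI : ∫ t in b..a, t ^ (q / 2 - 1) = (a ^ (q / 2) - b ^ (q / 2)) / (q / 2) := by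
    rw [integral_rpow (Or.inl (by linarith))]
    ring_nf
  have hJ : ∫ t in b..a, (t ^ (q / 2 - 1)) ^ 2 = (a ^ (q - 1) - b ^ (q - 1)) / (q - 1) := by
    rw [integral_congr hsq, integral_rpow (Or.inl (by linarith))]
    ring_nf
  have hCS := sq_integral_le hcont.intervalIntegrable (hcont.pow 2).intervalIntegrable
  rw [hI, hJ] at hCS
  have hq1 : 0 < q - 1 := by linarith
  calc (a ^ (q / 2) - b ^ (q / 2)) ^ 2
      = (q / 2) ^ 2 * ((a ^ (q / 2) - b ^ (q / 2)) / (q / 2)) ^ 2 := by field_simp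
    _ ≤ (q / 2) ^ 2 * ((a - b) * ((a ^ (q - 1) - b ^ (q - 1)) / (q - 1))) := by gcongr
    _ = q ^ 2 / (4 * (q - 1)) * ((a ^ (q - 1) - b ^ (q - 1)) * (a - b)) := by
      field_simp; ring
end

section
/- Let t ↦ g(t) be a continuously differentiable family of strictly positive self-adjoint operators on a finite-dimensional Hilbert space. Then d/dt log g(t) = ∫₀^∞ (s + g(t))⁻¹ · g'(t) · (s + g(t))⁻¹ ds. -/
/-!
For strictly positive `a` in a unital C⋆-algebra, the scalar identity
`log x = ∫₀^∞ ((s + 1)⁻¹ - (s + x)⁻¹) ds`, pushed through the continuous functional calculus,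
gives `log a = ∫₀^∞ ((s + 1)⁻¹ - (s + a)⁻¹) ds`. The right-hand side is defined for every `x`
near `a`, and `x ↦ (s + x)⁻¹` has derivative `h ↦ -(s + x)⁻¹ h (s + x)⁻¹` with
`‖(s + x)⁻¹‖ ≤ 2 (s + c)⁻¹` uniformly near `a`, where `c > 0` bounds the spectrum of `a` from
below. Dominated convergence therefore differentiates under the integral sign, and the chain rule
along `g` gives the formula. Matrices are a C⋆-algebra under the L² operator norm, whose topology
is the entrywise one, so derivatives and integrals can be read off entry by entry.
-/

open MeasureTheory Set Filter Topology ContinuousLinearMap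
open scoped ComplexOrder

namespace Real

lemma integrableOn_inv_add_sq {c : ℝ} (hc : 0 < c) :
    IntegrableOn (fun s : ℝ => ((s + c)⁻¹) ^ 2) (Ioi 0) := by
  refine (integrableOn_add_rpow_Ioi_of_lt (a := -2) (by norm_num) (by linarith)).congr_fun
    (fun s (hs : 0 < s) => ?_) measurableSet_Ioi
  change (s + c) ^ (-2 : ℝ) = _
  rw [rpow_neg (by positivity), inv_pow, rpow_two]

lemma norm_inv_add_one_sub_inv_add_le {m x s : ℝ} (hm : 0 < m) (hm1 : m ≤ 1) (hmx : m ≤ x)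
    (hs : 0 ≤ s) : ‖(s + 1)⁻¹ - (s + x)⁻¹‖ ≤ |x - 1| * ((s + m)⁻¹) ^ 2 := by
  have hsm : 0 < s + m := by positivity
  have hsx : 0 < s + x := by linarith
  have hdiff : (s + 1)⁻¹ - (s + x)⁻¹ = (x - 1) * ((s + 1)⁻¹ * (s + x)⁻¹) := by
    field_simp
    ring
  rw [hdiff, norm_mul, norm_mul, norm_inv, norm_inv, Real.norm_eq_abs, Real.norm_eq_abs,
    Real.norm_eq_abs, abs_of_pos (by linarith : 0 < s + 1), abs_of_pos hsx, sq]
  gcongr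

lemma integrableOn_inv_add_one_sub_inv_add {x : ℝ} (hx : 0 < x) :
    IntegrableOn (fun s : ℝ => (s + 1)⁻¹ - (s + x)⁻¹) (Ioi 0) := by
  refine ((integrableOn_inv_add_sq (lt_min one_pos hx)).const_mul |x - 1|).mono' ?_ ?_
  · refine ContinuousOn.aestronglyMeasurable (fun s (hs : 0 < s) => ?_) measurableSet_Ioi
    exact (ContinuousAt.sub (by fun_prop (disch := positivity))
      (by fun_prop (disch := positivity))).continuousWithinAt
  · filter_upwards [ae_restrict_mem measurableSet_Ioi] with s (hs : 0 < s)
    exact norm_inv_add_one_sub_inv_add_le (lt_min one_pos hx) (min_le_left _ _)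
      (min_le_right _ _) hs.le

lemma integral_inv_add_one_sub_inv_add {x : ℝ} (hx : 0 < x) :
    ∫ s in Ioi 0, ((s + 1)⁻¹ - (s + x)⁻¹) = log x := by
  have hderiv : ∀ s ∈ Ici (0 : ℝ), HasDerivAt (fun s => log (s + 1) - log (s + x))
      ((s + 1)⁻¹ - (s + x)⁻¹) s := fun s (hs : 0 ≤ s) => by
    simpa only [one_div, id] using (((hasDerivAt_id s).add_const 1).log (by positivity)).fun_sub
      (((hasDerivAt_id s).add_const x).log (by positivity))
  have hlim : Tendsto (fun s => log (s + 1) - log (s + x)) atTop (𝓝 0) := by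
    simpa using ((tendsto_log_comp_add_sub_log 1).sub (tendsto_log_comp_add_sub_log x)).congr
      fun s => sub_sub_sub_cancel_right _ _ _
  simpa using integral_Ioi_of_hasDerivAt_of_tendsto' hderiv
    (integrableOn_inv_add_one_sub_inv_add hx) hlim

lemma continuousOn_uncurry_inv_add_one_sub_inv_add :
    ContinuousOn (Function.uncurry fun s x : ℝ => (s + 1)⁻¹ - (s + x)⁻¹) (Ioi 0 ×ˢ Ioi 0) :=
  fun p ⟨(hs : 0 < p.1), (hx : 0 < p.2)⟩ =>
    (ContinuousAt.sub (by fun_prop (disch := positivity))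
      (by fun_prop (disch := positivity))).continuousWithinAt

end Real

noncomputable def logIntegrand {A : Type*} [Ring A] [Algebra ℝ A] (a : A) (s : ℝ) : A :=
  algebraMap ℝ A (s + 1)⁻¹ - Ring.inverse (algebraMap ℝ A s + a)

section NormedAlgebra

variable {A : Type*} [NormedRing A] [HasSummableGeomSeries A]

lemma IsUnit.norm_ringInverse_add_le {y h : A} (hy : IsUnit y)
    (hh : ‖Ring.inverse y‖ * ‖h‖ ≤ 2⁻¹) :
    IsUnit (y + h) ∧ ‖Ring.inverse (y + h)‖ ≤ 2 * ‖Ring.inverse y‖ := by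
  nontriviality A
  lift y to Aˣ using hy
  rw [Ring.inverse_unit] at hh ⊢
  have hy_pos := Units.norm_pos y⁻¹
  have hlt : ‖h‖ < ‖(↑y⁻¹ : A)‖⁻¹ := by
    rw [← one_div, lt_div_iff₀ hy_pos]
    linarith
  set z := y.add h hlt
  rw [show (y : A) + h = z from rfl, Ring.inverse_unit]
  refine ⟨z.isUnit, ?_⟩
  have hres : (↑z⁻¹ : A) = ↑y⁻¹ - ↑z⁻¹ * h * ↑y⁻¹ := by
    have hzy : (↑z⁻¹ : A) * (y + h) = 1 := Units.inv_mul z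
    calc (↑z⁻¹ : A) = ↑z⁻¹ * (y + h) * ↑y⁻¹ - ↑z⁻¹ * h * ↑y⁻¹ := by
          rw [mul_add, add_mul, mul_assoc _ (y : A), Units.mul_inv, mul_one, add_sub_cancel_right]
      _ = ↑y⁻¹ - ↑z⁻¹ * h * ↑y⁻¹ := by rw [hzy, one_mul]
  have hz : ‖(↑z⁻¹ : A)‖ ≤ ‖(↑y⁻¹ : A)‖ + ‖(↑z⁻¹ : A)‖ * ‖h‖ * ‖(↑y⁻¹ : A)‖ :=
    calc ‖(↑z⁻¹ : A)‖ = ‖↑y⁻¹ - ↑z⁻¹ * h * ↑y⁻¹‖ := congrArg norm hres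
      _ ≤ _ := (norm_sub_le _ _).trans (add_le_add_right (norm_mul₃_le ..) _)
  nlinarith [norm_nonneg (↑z⁻¹ : A)]

variable [NormedAlgebra ℝ A]

lemma continuousOn_ringInverse_algebraMap_add {x : A} {S : Set ℝ}
    (hx : ∀ s ∈ S, IsUnit (algebraMap ℝ A s + x)) :
    ContinuousOn (fun s => Ring.inverse (algebraMap ℝ A s + x)) S := fun s hs => by
  obtain ⟨u, hu⟩ := hx s hs
  exact ((NormedRing.inverse_continuousAt u).comp_of_eq
    (f := fun s : ℝ => algebraMap ℝ A s + x) (by fun_prop) hu.symm).continuousWithinAt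

lemma continuousOn_logIntegrand {x : A} (hx : ∀ s ∈ Ioi (0 : ℝ), IsUnit (algebraMap ℝ A s + x)) :
    ContinuousOn (logIntegrand x) (Ioi 0) :=
  ((continuous_algebraMap ℝ A).comp_continuousOn <| continuousOn_id.add continuousOn_const
    |>.inv₀ fun s (hs : 0 < s) => (by positivity : s + 1 ≠ 0)).sub
    (continuousOn_ringInverse_algebraMap_add hx)

lemma hasFDerivAt_logIntegrand {x : A} {s : ℝ} (hx : IsUnit (algebraMap ℝ A s + x)) :
    HasFDerivAt (logIntegrand · s) (mulLeftRight ℝ A (Ring.inverse (algebraMap ℝ A s + x))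
      (Ring.inverse (algebraMap ℝ A s + x))) x := by
  obtain ⟨u, hu⟩ := hx
  have hinv := hasFDerivAt_ringInverse (𝕜 := ℝ) u
  rw [hu] at hinv
  have := (hinv.comp x
    ((hasFDerivAt_id x).const_add (algebraMap ℝ A s))).const_sub (algebraMap ℝ A (s + 1)⁻¹)
  rw [← hu, Ring.inverse_unit]
  simpa [logIntegrand] using this

end NormedAlgebra

section CFC

variable {A : Type*} {p : A → Prop} [Ring A] [StarRing A] [TopologicalSpace A] [Algebra ℝ A]
  [ContinuousFunctionalCalculus ℝ A p]

lemma cfc_inv_const_add {a : A} {s : ℝ} (hs : ∀ x ∈ spectrum ℝ a, s + x ≠ 0)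
    (ha : p a := by cfc_tac) :
    cfc (fun x => (s + x)⁻¹) a = Ring.inverse (algebraMap ℝ A s + a) := by
  rw [cfc_inv (fun x => s + x) a hs, cfc_const_add s (fun x => x) a, cfc_id' ℝ a]

lemma logIntegrand_eq_cfc {a : A} {s : ℝ} (hs : ∀ x ∈ spectrum ℝ a, s + x ≠ 0)
    (ha : p a := by cfc_tac) :
    logIntegrand a s = cfc (fun x => (s + 1)⁻¹ - (s + x)⁻¹) a := by
  rw [cfc_sub (fun _ => (s + 1)⁻¹) (fun x => (s + x)⁻¹) a
      (hg := continuousOn_const.add continuousOn_id |>.inv₀ hs), cfc_const _ a,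
    cfc_inv_const_add hs, logIntegrand]

end CFC

section CStarAlgebra

variable {A : Type*} [CStarAlgebra A]

lemma norm_ringInverse_algebraMap_add_le {a : A} (ha : IsSelfAdjoint a) {c s : ℝ} (hc : 0 < c)
    (hs : 0 ≤ s) (hca : ∀ x ∈ spectrum ℝ a, c ≤ x) :
    ‖Ring.inverse (algebraMap ℝ A s + a)‖ ≤ (s + c)⁻¹ := by
  have hpos : ∀ x ∈ spectrum ℝ a, 0 < s + x := fun x hx => by linarith [hca x hx]
  rw [← cfc_inv_const_add fun x hx => (hpos x hx).ne']
  refine norm_cfc_le (by positivity) fun x hx => ?_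
  rw [norm_inv, Real.norm_of_nonneg (hpos x hx).le]
  gcongr
  exact hca x hx

variable [PartialOrder A] [StarOrderedRing A]

lemma IsStrictlyPositive.exists_pos_le_spectrum {a : A} (ha : IsStrictlyPositive a) :
    ∃ c > 0, ∀ x ∈ spectrum ℝ a, c ≤ x := by
  cases subsingleton_or_nontrivial A
  · exact ⟨1, one_pos, by simp [spectrum.of_subsingleton]⟩
  obtain ⟨c, hc, hca⟩ := (CFC.exists_pos_algebraMap_le_iff ha.isSelfAdjoint).2
    fun x hx => ha.spectrum_pos hx
  exact ⟨c, hc, (algebraMap_le_iff_le_spectrum ha.isSelfAdjoint).1 hca⟩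

lemma IsStrictlyPositive.exists_integrableOn_bound_inv_add_one_sub_inv_add {a : A}
    (ha : IsStrictlyPositive a) : ∃ bound : ℝ → ℝ, IntegrableOn bound (Ioi 0) ∧
      ∀ s ∈ Ioi (0 : ℝ), ∀ x ∈ spectrum ℝ a, ‖(s + 1)⁻¹ - (s + x)⁻¹‖ ≤ bound s := by
  obtain ⟨c, hc, hca⟩ := ha.exists_pos_le_spectrum
  obtain ⟨C, hC⟩ := (spectrum.isCompact (𝕜 := ℝ) a).isBounded.exists_norm_le
  have hm : 0 < min 1 c := lt_min one_pos hc
  refine ⟨fun s => (C + 1) * ((s + min 1 c)⁻¹) ^ 2, (Real.integrableOn_inv_add_sq hm).const_mul _,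
    fun s (hs : 0 < s) x hx => ?_⟩
  refine (Real.norm_inv_add_one_sub_inv_add_le hm (min_le_left _ _)
    ((min_le_right _ _).trans (hca x hx)) hs.le).trans ?_
  dsimp only
  gcongr
  exact (abs_sub _ _).trans (by simpa using hC x hx)

lemma integrableOn_logIntegrand {a : A} (ha : IsStrictlyPositive a) :
    IntegrableOn (logIntegrand a) (Ioi 0) := by
  obtain ⟨bound, hint, hle⟩ := ha.exists_integrableOn_bound_inv_add_one_sub_inv_add
  refine (integrableOn_cfc measurableSet_Ioi _ bound a
    (Real.continuousOn_uncurry_inv_add_one_sub_inv_add.mono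
      (prod_mono subset_rfl fun x hx => ha.spectrum_pos hx))
    (ae_restrict_of_forall_mem measurableSet_Ioi hle) hint.hasFiniteIntegral
    ha.isSelfAdjoint).congr_fun (fun s (hs : 0 < s) => (logIntegrand_eq_cfc
      (fun x hx => (add_pos hs (ha.spectrum_pos hx)).ne') ha.isSelfAdjoint).symm) measurableSet_Ioi

lemma CFC.log_eq_integral_logIntegrand {a : A} (ha : IsStrictlyPositive a) :
    log a = ∫ s in Ioi 0, logIntegrand a s := by
  obtain ⟨bound, hint, hle⟩ := ha.exists_integrableOn_bound_inv_add_one_sub_inv_add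
  calc log a = cfc (fun x => ∫ s in Ioi 0, ((s + 1)⁻¹ - (s + x)⁻¹)) a :=
        cfc_congr fun x hx => (Real.integral_inv_add_one_sub_inv_add (ha.spectrum_pos hx)).symm
    _ = ∫ s in Ioi 0, cfc (fun x => (s + 1)⁻¹ - (s + x)⁻¹) a :=
        cfc_setIntegral measurableSet_Ioi _ bound a
          (Real.continuousOn_uncurry_inv_add_one_sub_inv_add.mono
            (prod_mono subset_rfl fun x hx => ha.spectrum_pos hx))
          (ae_restrict_of_forall_mem measurableSet_Ioi hle) hint.hasFiniteIntegral
          ha.isSelfAdjoint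
    _ = ∫ s in Ioi 0, logIntegrand a s :=
        setIntegral_congr_fun measurableSet_Ioi fun s (hs : 0 < s) => (logIntegrand_eq_cfc
          (fun x hx => (add_pos hs (ha.spectrum_pos hx)).ne') ha.isSelfAdjoint).symm

lemma IsStrictlyPositive.norm_ringInverse_algebraMap_add_le_of_norm_sub_le {a x : A}
    (ha : IsStrictlyPositive a) {c s : ℝ} (hc : 0 < c) (hca : ∀ z ∈ spectrum ℝ a, c ≤ z)
    (hx : ‖x - a‖ ≤ c / 2) (hs : 0 ≤ s) :
    IsUnit (algebraMap ℝ A s + x) ∧ ‖Ring.inverse (algebraMap ℝ A s + x)‖ ≤ 2 * (s + c)⁻¹ := by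
  have hR := norm_ringInverse_algebraMap_add_le ha.isSelfAdjoint hc hs hca
  have hunit : IsUnit (algebraMap ℝ A s + a) :=
    (IsStrictlyPositive.nonneg_add (algebraMap_nonneg A hs) ha).isUnit
  have hsmall : ‖Ring.inverse (algebraMap ℝ A s + a)‖ * ‖x - a‖ ≤ 2⁻¹ :=
    calc _ ≤ c⁻¹ * (c / 2) := by
          gcongr
          exact hR.trans (inv_anti₀ hc (by linarith))
      _ = 2⁻¹ := by field_simp
  have key := hunit.norm_ringInverse_add_le hsmall
  rw [add_add_sub_cancel] at key
  exact ⟨key.1, key.2.trans (by gcongr)⟩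

/- The derivative is taken in all of `A`: the elements `x` near `a` need not be self-adjoint, so
the domination comes from the perturbation bound `IsUnit.norm_ringInverse_add_le` around `a`. -/
theorem hasFDerivAt_integral_logIntegrand {a : A} (ha : IsStrictlyPositive a) :
    IntegrableOn (fun s => mulLeftRight ℝ A (Ring.inverse (algebraMap ℝ A s + a))
      (Ring.inverse (algebraMap ℝ A s + a))) (Ioi 0) ∧
    HasFDerivAt (fun x => ∫ s in Ioi 0, logIntegrand x s)
      (∫ s in Ioi 0, mulLeftRight ℝ A (Ring.inverse (algebraMap ℝ A s + a))
        (Ring.inverse (algebraMap ℝ A s + a))) a := by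
  obtain ⟨c, hc, hca⟩ := ha.exists_pos_le_spectrum
  have hnear : ∀ x ∈ Metric.closedBall a (c / 2), ∀ s ∈ Ioi (0 : ℝ),
      IsUnit (algebraMap ℝ A s + x) ∧ ‖Ring.inverse (algebraMap ℝ A s + x)‖ ≤ 2 * (s + c)⁻¹ :=
    fun x hx s hs => ha.norm_ringInverse_algebraMap_add_le_of_norm_sub_le hc hca
      (mem_closedBall_iff_norm.1 hx) (le_of_lt hs)
  have hbound : ∀ x ∈ Metric.closedBall a (c / 2), ∀ s ∈ Ioi (0 : ℝ),
      ‖mulLeftRight ℝ A (Ring.inverse (algebraMap ℝ A s + x))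
        (Ring.inverse (algebraMap ℝ A s + x))‖ ≤ 4 * ((s + c)⁻¹) ^ 2 := fun x hx s hs => by
    have hR := (hnear x hx s hs).2
    calc _ ≤ ‖Ring.inverse (algebraMap ℝ A s + x)‖ * ‖Ring.inverse (algebraMap ℝ A s + x)‖ :=
          opNorm_mulLeftRight_apply_apply_le ..
      _ ≤ (2 * (s + c)⁻¹) * (2 * (s + c)⁻¹) := mul_self_le_mul_self (norm_nonneg _) hR
      _ = 4 * ((s + c)⁻¹) ^ 2 := by ring
  have hcont : ∀ x ∈ Metric.closedBall a (c / 2),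
      ContinuousOn (fun s => Ring.inverse (algebraMap ℝ A s + x)) (Ioi 0) := fun x hx =>
    continuousOn_ringInverse_algebraMap_add fun s hs => (hnear x hx s hs).1
  have ha_mem : a ∈ Metric.closedBall a (c / 2) := Metric.mem_closedBall_self (by positivity)
  have hmeas := ((((mulLeftRight ℝ A).continuous.comp_continuousOn (hcont a ha_mem)).clm_apply
    (hcont a ha_mem))).aestronglyMeasurable (μ := volume) measurableSet_Ioi
  have hdom := (Real.integrableOn_inv_add_sq hc).const_mul 4
  refine ⟨hdom.mono' hmeas (ae_restrict_of_forall_mem measurableSet_Ioi (hbound a ha_mem)),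
    hasFDerivAt_integral_of_dominated_of_fderiv_le (Metric.closedBall_mem_nhds a (half_pos hc))
      ?_ (integrableOn_logIntegrand ha) hmeas
      (ae_restrict_of_forall_mem measurableSet_Ioi fun s hs x hx => hbound x hx s hs) hdom
      (ae_restrict_of_forall_mem measurableSet_Ioi fun s hs x hx =>
        hasFDerivAt_logIntegrand (hnear x hx s hs).1)⟩
  filter_upwards [Metric.closedBall_mem_nhds a (half_pos hc)] with x hx
  exact (continuousOn_logIntegrand fun s hs => (hnear x hx s hs).1).aestronglyMeasurable
    measurableSet_Ioi

theorem CFC.hasDerivAt_log_comp {g : ℝ → A} {g' : A} {t : ℝ}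
    (hpos : ∀ᶠ u in 𝓝 t, IsStrictlyPositive (g u)) (hg : HasDerivAt g g' t) :
    IntegrableOn (fun s => Ring.inverse (algebraMap ℝ A s + g t) * g' *
      Ring.inverse (algebraMap ℝ A s + g t)) (Ioi 0) ∧
    HasDerivAt (fun u => log (g u)) (∫ s in Ioi 0,
      Ring.inverse (algebraMap ℝ A s + g t) * g' * Ring.inverse (algebraMap ℝ A s + g t)) t := by
  obtain ⟨hint, hderiv⟩ := hasFDerivAt_integral_logIntegrand hpos.self_of_nhds
  have hcomp := hderiv.comp_hasDerivAt t hg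
  rw [integral_apply hint] at hcomp
  refine ⟨hint.apply_continuousLinearMap g', hcomp.congr_of_eventuallyEq ?_⟩
  filter_upwards [hpos] with u hu using log_eq_integral_logIntegrand hu

end CStarAlgebra

section Matrix

open scoped Matrix.Norms.L2Operator

variable {m n : Type*} [Fintype m] [Fintype n] [DecidableEq n]

theorem Matrix.hasDerivAt_iff_forall_hasDerivAt_apply {f : ℝ → Matrix m n ℂ}
    {f' : Matrix m n ℂ} {t : ℝ} :
    HasDerivAt f f' t ↔ ∀ i j, HasDerivAt (fun u => f u i j) (f' i j) t := by
  simp only [hasDerivAt_iff_tendsto_slope]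
  exact tendsto_pi_nhds.trans (forall_congr' fun i => tendsto_pi_nhds)

theorem Matrix.integral_apply {X : Type*} [MeasurableSpace X] {μ : Measure X}
    {f : X → Matrix m n ℂ} (hf : Integrable f μ) (i : m) (j : n) :
    (∫ x, f x ∂μ) i j = ∫ x, f x i j ∂μ :=
  ((Matrix.entryLinearMap ℂ ℂ i j).toContinuousLinearMap.integral_comp_comm hf).symm

end Matrix

open scoped Matrix.Norms.L2Operator MatrixOrder in
theorem deriv_opLog_general (n : ℕ) (g g' : ℝ → Matrix (Fin n) (Fin n) ℂ)
    (hpos : ∀ t, (g t).PosDef)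
    (hderiv : ∀ t i j, HasDerivAt (fun u => g u i j) (g' t i j) t) :
    ∀ t i j, HasDerivAt (fun u => cfc Real.log (g u) i j)
      (∫ s in Set.Ioi (0 : ℝ),
        (((s : ℂ) • 1 + g t)⁻¹ * g' t * ((s : ℂ) • 1 + g t)⁻¹) i j) t := by
  intro t i j
  obtain ⟨hint, hlog⟩ := CFC.hasDerivAt_log_comp
    (.of_forall fun u => (hpos u).isStrictlyPositive)
    (Matrix.hasDerivAt_iff_forall_hasDerivAt_apply.2 (hderiv t))
  have hres : ∀ s : ℝ, Ring.inverse (algebraMap ℝ _ s + g t) = ((s : ℂ) • 1 + g t)⁻¹ := fun s => by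
    rw [Matrix.nonsing_inv_eq_ringInverse, Algebra.algebraMap_eq_smul_one, Complex.coe_smul]
  simp_rw [hres] at hint hlog
  rw [← Matrix.integral_apply hint]
  exact Matrix.hasDerivAt_iff_forall_hasDerivAt_apply.1 hlog i j

/-- Lemma 3 (general form): if `t ↦ g t` is a continuously differentiable family of
strictly positive self-adjoint operators on a finite-dimensional Hilbert space, with
derivative `g'`, then `d/dt log g(t) = ∫₀^∞ (s + g t)⁻¹ · g' t · (s + g t)⁻¹ ds`
(entrywise, hence in operator norm). -/
theorem deriv_opLog (n : ℕ) (g g' : ℝ → Matrix (Fin n) (Fin n) ℂ)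
    (hpos : ∀ t, (g t).PosDef)
    (hderiv : ∀ t i j, HasDerivAt (fun u => g u i j) (g' t i j) t)
    (hcont : ∀ i j, Continuous fun t => g' t i j) :
    ∀ t i j, HasDerivAt (fun u => cfc Real.log (g u) i j)
      (∫ s in Set.Ioi (0 : ℝ),
        (((s : ℂ) • 1 + g t)⁻¹ * g' t * ((s : ℂ) • 1 + g t)⁻¹) i j) t :=
  deriv_opLog_general n g g' hpos hderiv
end

section
/- Let L be the generator of a continuous semigroup of positive, trace-preserving, trace-symmetric maps on B(h), h finite-dimensional. Then for every strictly positive f and every q > 1, −tr(f^{q/2} L(f^{q/2})) ≤ (q²/(4(q−1))) · (−tr(f^{q−1} L f)). -/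
/-!
Diagonalize `f = ∑ᵢ λᵢ Eᵢ`. For a positive, trace-preserving, trace-symmetric map `S`, the numbers
`K i j = re tr(Eᵢ S(Eⱼ))` form a symmetric doubly stochastic matrix, and
`tr(g(f) h(f)) - tr(g(f) S(h(f))) = ½ ∑ᵢⱼ K i j (g λᵢ - g λⱼ)(h λᵢ - h λⱼ)`.
Applied to `S = P t`, the scalar inequality
`(a^{q/2} - b^{q/2})² ≤ q²/(4(q-1)) (a^{q-1} - b^{q-1})(a - b)` (Cauchy–Schwarz for
`∫_b^a x^{q/2-1}`) shows that `t ↦ tr(f^{q/2} P t f^{q/2}) - q²/(4(q-1)) tr(f^{q-1} P t f)` is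
minimal at `t = 0`, so its derivative `tr(f^{q/2} L f^{q/2}) - q²/(4(q-1)) tr(f^{q-1} L f)` there
is nonnegative.
-/

open scoped ComplexOrder

noncomputable section

def rpowM {n : ℕ} (f : Matrix (Fin n) (Fin n) ℂ) (p : ℝ) : Matrix (Fin n) (Fin n) ℂ :=
  cfc (fun x : ℝ => x ^ p) f

open Finset Matrix Unitary

open intervalIntegral in
theorem sq_intervalIntegral_le {g : ℝ → ℝ} {a b : ℝ} (hab : b ≤ a)
    (hg : IntervalIntegrable g MeasureTheory.volume b a)
    (hg2 : IntervalIntegrable (fun x => g x ^ 2) MeasureTheory.volume b a) :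
    (∫ x in b..a, g x) ^ 2 ≤ (a - b) * ∫ x in b..a, g x ^ 2 := by
  set I := ∫ x in b..a, g x
  -- 0 ≤ ∫ (I - (a - b) g)² = (a - b) ((a - b) ∫ g² - I²)
  have hsq : 0 ≤ ∫ x in b..a, (I - (a - b) * g x) ^ 2 :=
    integral_nonneg hab fun x _ => sq_nonneg _
  have hexp : ∫ x in b..a, (I - (a - b) * g x) ^ 2
      = (a - b) * ((a - b) * ∫ x in b..a, g x ^ 2) - (a - b) * I ^ 2 := by
    have : ∀ x, (I - (a - b) * g x) ^ 2
        = I ^ 2 - 2 * I * (a - b) * g x + (a - b) ^ 2 * g x ^ 2 := fun x => by ring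
    simp_rw [this]
    rw [integral_add (intervalIntegrable_const.sub (hg.const_mul _)) (hg2.const_mul _),
      integral_sub intervalIntegrable_const (hg.const_mul _), integral_const_mul,
      integral_const_mul, integral_const, smul_eq_mul]
    ring
  rcases hab.eq_or_lt with rfl | hlt
  · simp [I]
  · nlinarith [sub_pos.2 hlt]

theorem sq_rpow_half_sub_le {q a b : ℝ} (hq : 1 < q) (ha : 0 ≤ a) (hb : 0 ≤ b) :
    (a ^ (q / 2) - b ^ (q / 2)) ^ 2
      ≤ q ^ 2 / (4 * (q - 1)) * ((a ^ (q - 1) - b ^ (q - 1)) * (a - b)) := by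
  wlog hba : b ≤ a generalizing a b
  · have := this hb ha (le_of_not_ge hba)
    linarith [show (a ^ (q / 2) - b ^ (q / 2)) ^ 2 = (b ^ (q / 2) - a ^ (q / 2)) ^ 2 by ring,
      show (a ^ (q - 1) - b ^ (q - 1)) * (a - b) = (b ^ (q - 1) - a ^ (q - 1)) * (b - a) by ring]
  -- `a^{q/2} - b^{q/2} = (q/2) ∫_b^a x^{q/2-1}` and `a^{q-1} - b^{q-1} = (q-1) ∫_b^a x^{q-2}`
  have hr : -1 < q / 2 - 1 := by linarith
  have hsq : ∀ x ∈ Set.uIcc b a, (x ^ (q / 2 - 1)) ^ 2 = x ^ (q - 2) := fun x hx => by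
    rw [Set.uIcc_of_le hba] at hx
    rw [← Real.rpow_mul_natCast (hb.trans hx.1)]; norm_num; ring_nf
  have hI1 : ∫ x in b..a, x ^ (q / 2 - 1) = (a ^ (q / 2) - b ^ (q / 2)) / (q / 2) := by
    rw [integral_rpow (Or.inl hr)]; norm_num
  have hI2 : ∫ x in b..a, (x ^ (q / 2 - 1)) ^ 2 = (a ^ (q - 1) - b ^ (q - 1)) / (q - 1) := by
    rw [intervalIntegral.integral_congr hsq, integral_rpow (Or.inl (by linarith))]; ring_nf
  have hcs := sq_intervalIntegral_le hba (intervalIntegral.intervalIntegrable_rpow' hr)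
    ((intervalIntegral.intervalIntegrable_rpow' (r := q - 2) (by linarith)).congr
      fun x hx => (hsq x (Set.uIoc_subset_uIcc hx)).symm)
  rw [hI1, hI2, div_pow, div_le_iff₀ (by positivity)] at hcs
  calc _ ≤ (a - b) * ((a ^ (q - 1) - b ^ (q - 1)) / (q - 1)) * (q / 2) ^ 2 := hcs
    _ = _ := by field_simp; ring

section StochasticKernel

variable {ι : Type*} [Fintype ι] {K : ι → ι → ℝ}

theorem sum_mul_sub_sum_kernel_eq (hsymm : ∀ i j, K i j = K j i) (hrow : ∀ i, ∑ j, K i j = 1)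
    (b c : ι → ℝ) :
    ∑ i, b i * c i - ∑ i, ∑ j, K i j * (b i * c j)
      = (∑ i, ∑ j, K i j * ((b i - b j) * (c i - c j))) / 2 := by
  have hdiag : ∀ g : ι → ℝ, ∑ i, ∑ j, K i j * g i = ∑ i, g i := fun g => by
    simp_rw [← sum_mul, hrow, one_mul]
  have hdiag' : ∑ i, ∑ j, K i j * (b j * c j) = ∑ i, b i * c i := by
    rw [sum_comm]; simp_rw [hsymm _ _]; exact hdiag _
  have hcross : ∑ i, ∑ j, K i j * (b j * c i) = ∑ i, ∑ j, K i j * (b i * c j) := by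
    rw [sum_comm]; simp_rw [hsymm _ _]
  have hexp : ∀ i j, K i j * ((b i - b j) * (c i - c j))
      = K i j * (b i * c i) + K i j * (b j * c j) - K i j * (b i * c j) - K i j * (b j * c i) :=
    fun i j => by ring
  simp_rw [hexp, sum_sub_distrib, sum_add_distrib, hdiag, hdiag', hcross]
  ring

theorem sum_mul_self_sub_sum_kernel_le (hnonneg : ∀ i j, 0 ≤ K i j)
    (hsymm : ∀ i j, K i j = K j i) (hrow : ∀ i, ∑ j, K i j = 1) {C : ℝ} {a b c : ι → ℝ}
    (h : ∀ i j, (a i - a j) ^ 2 ≤ C * ((b i - b j) * (c i - c j))) :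
    ∑ i, a i * a i - ∑ i, ∑ j, K i j * (a i * a j)
      ≤ C * (∑ i, b i * c i - ∑ i, ∑ j, K i j * (b i * c j)) := by
  rw [sum_mul_sub_sum_kernel_eq hsymm hrow, sum_mul_sub_sum_kernel_eq hsymm hrow, mul_div_assoc',
    mul_sum]
  refine div_le_div_of_nonneg_right (sum_le_sum fun i _ => ?_) zero_le_two
  rw [mul_sum]
  refine sum_le_sum fun j _ => ?_
  calc K i j * ((a i - a j) * (a i - a j)) = K i j * (a i - a j) ^ 2 := by ring
    _ ≤ K i j * (C * ((b i - b j) * (c i - c j))) :=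
      mul_le_mul_of_nonneg_left (h i j) (hnonneg i j)
    _ = C * (K i j * ((b i - b j) * (c i - c j))) := by ring

end StochasticKernel

namespace Matrix

variable {𝕜 n : Type*} [RCLike 𝕜] [Fintype n] [DecidableEq n]

def unitaryDiag (u : unitary (Matrix n n 𝕜)) (a : n → ℝ) : Matrix n n 𝕜 :=
  conjStarAlgAut 𝕜 _ u (diagonal (RCLike.ofReal ∘ a))

/-- For `u = hA.eigenvectorUnitary` these are the spectral projections `Eᵢ` of `A`. -/
def columnProj (u : unitary (Matrix n n 𝕜)) (i : n) : Matrix n n 𝕜 :=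
  conjStarAlgAut 𝕜 _ u (diagonal (Pi.single i 1))

variable (u : unitary (Matrix n n 𝕜))

theorem trace_conjStarAlgAut (x : Matrix n n 𝕜) : (conjStarAlgAut 𝕜 _ u x).trace = x.trace := by
  rw [conjStarAlgAut_apply, trace_mul_cycle, coe_star_mul_self, one_mul]

theorem unitaryDiag_eq_sum (a : n → ℝ) : unitaryDiag u a = ∑ j, (a j : 𝕜) • columnProj u j := by
  have : diagonal (RCLike.ofReal ∘ a) = ∑ j, (a j : 𝕜) • diagonal (Pi.single j (1 : 𝕜)) := by
    ext i k
    simp [Matrix.sum_apply, diagonal_apply, Pi.single_apply, RCLike.real_smul_eq_coe_mul]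
  simp only [unitaryDiag, columnProj, this, map_sum, map_smul]

theorem sum_columnProj : ∑ j, columnProj u j = 1 := by
  simpa [unitaryDiag] using (unitaryDiag_eq_sum u 1).symm

theorem trace_columnProj (i : n) : (columnProj u i).trace = 1 := by
  rw [columnProj, trace_conjStarAlgAut]
  simp

theorem posSemidef_columnProj (i : n) : (columnProj u i).PosSemidef := by
  rw [columnProj, conjStarAlgAut_apply, star_eq_conjTranspose]
  exact (PosSemidef.diagonal fun j => by by_cases h : j = i <;> simp [h])
    |>.mul_mul_conjTranspose_same _

theorem re_trace_columnProj_mul_nonneg (i : n) {Y : Matrix n n 𝕜} (hY : Y.PosSemidef) :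
    0 ≤ RCLike.re (columnProj u i * Y).trace := by
  have hdiag : (columnProj u i * Y).trace = ((star (u : Matrix n n 𝕜)) * Y * u) i i := by
    rw [columnProj, conjStarAlgAut_apply, mul_assoc, mul_assoc, trace_mul_comm]
    simp [trace, diagonal_mul, Pi.single_apply, mul_assoc]
  rw [hdiag, star_eq_conjTranspose]
  exact RCLike.nonneg_iff.mp ((hY.conjTranspose_mul_mul_same _).diag_nonneg) |>.1

theorem re_trace_unitaryDiag_mul_unitaryDiag (a b : n → ℝ) :
    RCLike.re (unitaryDiag u a * unitaryDiag u b).trace = ∑ i, a i * b i := by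
  rw [unitaryDiag, unitaryDiag, ← map_mul, trace_conjStarAlgAut, diagonal_mul_diagonal,
    trace_diagonal, map_sum]
  simp

def transitionMatrix (S : Matrix n n 𝕜 →ₗ[𝕜] Matrix n n 𝕜) (i j : n) : ℝ :=
  RCLike.re (columnProj u i * S (columnProj u j)).trace

variable {S : Matrix n n 𝕜 →ₗ[𝕜] Matrix n n 𝕜}

theorem re_trace_unitaryDiag_mul_map (a b : n → ℝ) :
    RCLike.re (unitaryDiag u a * S (unitaryDiag u b)).trace
      = ∑ i, ∑ j, transitionMatrix u S i j * (a i * b j) := by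
  simp only [unitaryDiag_eq_sum, map_sum, map_smul, sum_mul, mul_sum, trace_sum,
    smul_mul_smul_comm, trace_smul, smul_eq_mul, transitionMatrix]
  rw [sum_comm]
  refine sum_congr rfl fun i _ => sum_congr rfl fun j _ => ?_
  rw [← RCLike.ofReal_mul, RCLike.re_ofReal_mul, mul_comm]

theorem transitionMatrix_nonneg (hS : ∀ x, x.PosSemidef → (S x).PosSemidef) (i j : n) :
    0 ≤ transitionMatrix u S i j :=
  re_trace_columnProj_mul_nonneg u i (hS _ (posSemidef_columnProj u j))

theorem transitionMatrix_symm (hS : ∀ x y, (S x * y).trace = (x * S y).trace) (i j : n) :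
    transitionMatrix u S i j = transitionMatrix u S j i := by
  rw [transitionMatrix, transitionMatrix, ← hS, trace_mul_comm]

theorem sum_transitionMatrix (hS : ∀ x y, (S x * y).trace = (x * S y).trace)
    (hS' : ∀ x, (S x).trace = x.trace) (i : n) :
    ∑ j, transitionMatrix u S i j = 1 := by
  simp only [transitionMatrix, ← map_sum, ← trace_sum, ← mul_sum, sum_columnProj, ← hS, mul_one,
    hS', trace_columnProj, RCLike.one_re]

theorem re_trace_unitaryDiag_sub_map_le (hpos : ∀ x, x.PosSemidef → (S x).PosSemidef)
    (htr : ∀ x, (S x).trace = x.trace) (hsymm : ∀ x y, (S x * y).trace = (x * S y).trace)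
    {C : ℝ} {a b c : n → ℝ} (h : ∀ i j, (a i - a j) ^ 2 ≤ C * ((b i - b j) * (c i - c j))) :
    RCLike.re (unitaryDiag u a * unitaryDiag u a).trace
        - RCLike.re (unitaryDiag u a * S (unitaryDiag u a)).trace
      ≤ C * (RCLike.re (unitaryDiag u b * unitaryDiag u c).trace
        - RCLike.re (unitaryDiag u b * S (unitaryDiag u c)).trace) := by
  simp only [re_trace_unitaryDiag_mul_unitaryDiag, re_trace_unitaryDiag_mul_map]
  exact sum_mul_self_sub_sum_kernel_le (transitionMatrix_nonneg u hpos)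
    (transitionMatrix_symm u hsymm) (sum_transitionMatrix u hsymm htr) h

theorem IsHermitian.cfc_eq_unitaryDiag {A : Matrix n n 𝕜} (hA : A.IsHermitian) (g : ℝ → ℝ) :
    cfc g A = unitaryDiag hA.eigenvectorUnitary (g ∘ hA.eigenvalues) :=
  hA.cfc_eq g

theorem IsHermitian.eq_unitaryDiag {A : Matrix n n 𝕜} (hA : A.IsHermitian) :
    A = unitaryDiag hA.eigenvectorUnitary hA.eigenvalues :=
  hA.spectral_theorem

end Matrix

theorem re_trace_rpowM_sub_map_le {n : ℕ}
    {S : Matrix (Fin n) (Fin n) ℂ →ₗ[ℂ] Matrix (Fin n) (Fin n) ℂ}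
    (hpos : ∀ x, x.PosSemidef → (S x).PosSemidef) (htr : ∀ x, (S x).trace = x.trace)
    (hsymm : ∀ x y, (S x * y).trace = (x * S y).trace) {f : Matrix (Fin n) (Fin n) ℂ}
    (hf : f.PosDef) {q : ℝ} (hq : 1 < q) :
    (rpowM f (q / 2) * rpowM f (q / 2)).trace.re
        - (rpowM f (q / 2) * S (rpowM f (q / 2))).trace.re
      ≤ q ^ 2 / (4 * (q - 1)) *
        ((rpowM f (q - 1) * f).trace.re - (rpowM f (q - 1) * S f).trace.re) := by
  obtain ⟨u, l, hl, hfu, hpow⟩ : ∃ u l, (∀ i, 0 < l i) ∧ f = unitaryDiag u l ∧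
      ∀ p, rpowM f p = unitaryDiag u fun i => l i ^ p :=
    ⟨_, _, hf.eigenvalues_pos, hf.isHermitian.eq_unitaryDiag,
      fun _ => hf.isHermitian.cfc_eq_unitaryDiag _⟩
  rw [hpow, hpow, hfu]
  simpa only [RCLike.re_to_complex] using re_trace_unitaryDiag_sub_map_le u hpos htr hsymm
    fun i j => sq_rpow_half_sub_le hq (hl i).le (hl j).le

theorem hasDerivAt_re_trace_mul {𝕜 n : Type*} [RCLike 𝕜] [Fintype n] {M : ℝ → Matrix n n 𝕜}
    {M' : Matrix n n 𝕜} {t : ℝ} (hM : ∀ i j, HasDerivAt (fun u => M u i j) (M' i j) t)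
    (x : Matrix n n 𝕜) :
    HasDerivAt (fun u => RCLike.re (x * M u).trace) (RCLike.re (x * M').trace) t := by
  have htrace : HasDerivAt (fun u => (x * M u).trace) (x * M').trace t := by
    simp only [trace, Matrix.diag, mul_apply]
    exact HasDerivAt.fun_sum fun i _ => HasDerivAt.fun_sum fun j _ => (hM j i).const_mul (x i j)
  exact RCLike.reCLM.hasFDerivAt.comp_hasDerivAt t htrace

theorem IsMinOn.hasDerivAt_nonneg {φ : ℝ → ℝ} {a D : ℝ} (hmin : IsMinOn φ (Set.Ici a) a)
    (hφ : HasDerivAt φ D a) : 0 ≤ D := by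
  have hone : (1 : ℝ) ∈ posTangentConeAt (Set.Ici a) a :=
    one_mem_posTangentConeAt_iff_frequently.2 <| Filter.Eventually.frequently <|
      eventually_nhdsWithin_of_forall fun _ hx => Set.Ioi_subset_Ici_self hx
  simpa using hmin.localize.hasFDerivWithinAt_nonneg
    hφ.hasDerivWithinAt.hasFDerivWithinAt hone

theorem trace_RC_general (n : ℕ)
    (P : ℝ → (Matrix (Fin n) (Fin n) ℂ →ₗ[ℂ] Matrix (Fin n) (Fin n) ℂ))
    (L : Matrix (Fin n) (Fin n) ℂ →ₗ[ℂ] Matrix (Fin n) (Fin n) ℂ)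
    (hP0 : P 0 = LinearMap.id)
    (hPpos : ∀ t : ℝ, 0 ≤ t → ∀ x : Matrix (Fin n) (Fin n) ℂ,
      x.PosSemidef → (P t x).PosSemidef)
    (hPtr : ∀ t : ℝ, 0 ≤ t → ∀ x : Matrix (Fin n) (Fin n) ℂ, (P t x).trace = x.trace)
    (hPsym : ∀ t : ℝ, 0 ≤ t → ∀ x y : Matrix (Fin n) (Fin n) ℂ,
      (P t x * y).trace = (x * P t y).trace)
    (hgen : ∀ (x : Matrix (Fin n) (Fin n) ℂ) (t : ℝ) (i j : Fin n),
      HasDerivAt (fun u => P u x i j) ((L (P t x)) i j) t) :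
    ∀ f : Matrix (Fin n) (Fin n) ℂ, f.PosDef → ∀ q : ℝ, 1 < q →
      -((rpowM f (q / 2) * L (rpowM f (q / 2))).trace).re ≤
        q ^ 2 / (4 * (q - 1)) * (-((rpowM f (q - 1) * L f).trace).re) := by
  intro f hf q hq
  set C := q ^ 2 / (4 * (q - 1))
  have hP0x : ∀ x, P 0 x = x := fun x => by rw [hP0, LinearMap.id_apply]
  let φ : ℝ → ℝ := fun t => (rpowM f (q / 2) * P t (rpowM f (q / 2))).trace.re
    - C * (rpowM f (q - 1) * P t f).trace.re
  have hderiv : HasDerivAt φ ((rpowM f (q / 2) * L (rpowM f (q / 2))).trace.re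
      - C * (rpowM f (q - 1) * L f).trace.re) 0 := by
    simpa only [hP0x, RCLike.re_to_complex] using (hasDerivAt_re_trace_mul (hgen _ 0) _).fun_sub
      ((hasDerivAt_re_trace_mul (hgen _ 0) _).const_mul C)
  have hmin : IsMinOn φ (Set.Ici 0) 0 := isMinOn_iff.2 fun t ht => by
    have := re_trace_rpowM_sub_map_le (hPpos t ht) (hPtr t ht) (hPsym t ht) hf hq
    simp only [φ, hP0x]
    linarith
  linarith [hmin.hasDerivAt_nonneg hderiv]

/-- Regularity condition (RC) in the trace case: if `L` generates a continuous
semigroup of positive, trace-preserving, trace-symmetric maps, then for `f > 0`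
and `q > 1`, `−tr(f^{q/2} L(f^{q/2})) ≤ (q²/(4(q−1)))·(−tr(f^{q−1} L f))`. -/
theorem trace_RC (n : ℕ)
    (P : ℝ → (Matrix (Fin n) (Fin n) ℂ →ₗ[ℂ] Matrix (Fin n) (Fin n) ℂ))
    (L : Matrix (Fin n) (Fin n) ℂ →ₗ[ℂ] Matrix (Fin n) (Fin n) ℂ)
    (hP0 : P 0 = LinearMap.id)
    (hPsg : ∀ s t : ℝ, 0 ≤ s → 0 ≤ t → P (s + t) = (P s).comp (P t))
    (hPpos : ∀ t : ℝ, 0 ≤ t → ∀ x : Matrix (Fin n) (Fin n) ℂ,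
      x.PosSemidef → (P t x).PosSemidef)
    (hPtr : ∀ t : ℝ, 0 ≤ t → ∀ x : Matrix (Fin n) (Fin n) ℂ, (P t x).trace = x.trace)
    (hPsym : ∀ t : ℝ, 0 ≤ t → ∀ x y : Matrix (Fin n) (Fin n) ℂ,
      (P t x * y).trace = (x * P t y).trace)
    (hgen : ∀ (x : Matrix (Fin n) (Fin n) ℂ) (t : ℝ) (i j : Fin n),
      HasDerivAt (fun u => P u x i j) ((L (P t x)) i j) t) :
    ∀ f : Matrix (Fin n) (Fin n) ℂ, f.PosDef → ∀ q : ℝ, 1 < q →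
      -((rpowM f (q / 2) * L (rpowM f (q / 2))).trace).re ≤
        q ^ 2 / (4 * (q - 1)) * (-((rpowM f (q - 1) * L f).trace).re) :=
  trace_RC_general n P L hP0 hPpos hPtr hPsym hgen
end
end

section
/- Let L be the generator of a continuous semigroup of positive, trace-preserving, trace-symmetric maps on B(h), h finite-dimensional. Then for every strictly positive f, −4·tr(f^{1/2} L(f^{1/2})) ≤ −tr((log f)·L(f)). -/
open scoped ComplexOrder

noncomputable section

/-- Operator logarithm via functional calculus. -/
def logM {n : ℕ} (g : Matrix (Fin n) (Fin n) ℂ) : Matrix (Fin n) (Fin n) ℂ :=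
  cfc Real.log g

/-!
Differentiating the semigroup at `t = 0` shows that `L` annihilates traces, is symmetric for the
trace pairing, and satisfies `0 ≤ Re tr (x * L y)` for positive semidefinite `x, y` with
`x * y = 0`. Expanding in the spectral projections `p k` of `f` (eigenvalues `λ k`) turns
`Re tr (g f * L (h f))` into the Dirichlet form
`-(1/2) ∑ c k l (g (λ k) - g (λ l)) (h (λ k) - h (λ l))`, `c k l = Re tr (p k * L (p l))`, whose
weights are nonnegative off the diagonal. The inequality then holds term by term, by
`4 (√a - √b)² ≤ (log a - log b) (a - b)`: the logarithmic mean of `√a` and `√b` is at most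
their arithmetic mean.
-/

open Matrix

theorem two_mul_sub_le_log_sub_log_mul_add {s t : ℝ} (ht : 0 < t) (hts : t ≤ s) :
    2 * (s - t) ≤ (Real.log s - Real.log t) * (s + t) := by
  have hs : 0 < s := ht.trans_le hts
  set a := s / t - 1
  have ha : 0 ≤ a := by simpa [a, one_le_div ht] using hts
  have hfirst := le_hasSum (Real.hasSum_log_one_add ha) 0 fun k _ => by positivity
  have hfrac : a / (a + 2) = (s - t) / (s + t) := by
    rw [div_eq_div_iff (by positivity) (by positivity)]
    simp only [a]
    field_simp
    ring
  rw [show 1 + a = s / t by ring, Real.log_div hs.ne' ht.ne', hfrac] at hfirst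
  rw [← div_le_iff₀ (by positivity)]
  simpa [mul_div_assoc] using hfirst

theorem four_mul_sqrt_sub_sqrt_sq_le {a b : ℝ} (ha : 0 < a) (hb : 0 < b) :
    4 * (√a - √b) ^ 2 ≤ (Real.log a - Real.log b) * (a - b) := by
  wlog hba : b ≤ a generalizing a b
  · nlinarith [this hb ha (le_of_not_ge hba)]
  have key := two_mul_sub_le_log_sub_log_mul_add (Real.sqrt_pos.mpr hb) (Real.sqrt_le_sqrt hba)
  have hsub : 0 ≤ √a - √b := sub_nonneg.mpr (Real.sqrt_le_sqrt hba)
  calc 4 * (√a - √b) ^ 2 = 2 * (2 * (√a - √b)) * (√a - √b) := by ring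
    _ ≤ 2 * ((Real.log √a - Real.log √b) * (√a + √b)) * (√a - √b) := by gcongr
    _ = (Real.log a - Real.log b) * (a - b) := by
      rw [Real.log_sqrt ha.le, Real.log_sqrt hb.le]
      linear_combination (Real.log a - Real.log b) * (Real.sq_sqrt ha.le - Real.sq_sqrt hb.le)

theorem sum_sum_mul_eq_neg_half_sum_sum_mul_sub_mul_sub {ι : Type*} [Fintype ι]
    (c : ι → ι → ℝ) (u v : ι → ℝ) (hsymm : ∀ k l, c k l = c l k) (hrow : ∀ k, ∑ l, c k l = 0) :
    ∑ k, ∑ l, c k l * (u k * v l) = -(1 / 2) * ∑ k, ∑ l, c k l * ((u k - u l) * (v k - v l)) := by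
  have hdiag (w : ι → ℝ) : ∑ k, ∑ l, c k l * w k = 0 := by
    simp [← Finset.sum_mul, hrow]
  have htranspose (w : ι → ι → ℝ) : ∑ k, ∑ l, c k l * w l k = ∑ k, ∑ l, c k l * w k l := by
    rw [Finset.sum_comm]
    exact Finset.sum_congr rfl fun k _ => Finset.sum_congr rfl fun l _ => by rw [hsymm]
  have hexpand : ∑ k, ∑ l, c k l * ((u k - u l) * (v k - v l))
      = ∑ k, ∑ l, c k l * (u k * v k) + ∑ k, ∑ l, c k l * (u l * v l)
        - ∑ k, ∑ l, c k l * (u k * v l) - ∑ k, ∑ l, c k l * (u l * v k) := by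
    simp only [← Finset.sum_add_distrib, ← Finset.sum_sub_distrib]
    exact Finset.sum_congr rfl fun k _ => Finset.sum_congr rfl fun l _ => by ring
  rw [hexpand, hdiag, htranspose fun k l => u k * v k, hdiag,
    htranspose fun k l => u l * v k]
  ring

variable {m : Type*} [Fintype m]

theorem hasDerivAt_trace_mul {F : ℝ → Matrix m m ℂ} {F' : Matrix m m ℂ} {t : ℝ}
    (hF : ∀ i j, HasDerivAt (fun u => F u i j) (F' i j) t) (x : Matrix m m ℂ) :
    HasDerivAt (fun u => (x * F u).trace) (x * F').trace t := by
  simp only [trace, diag, mul_apply]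
  exact HasDerivAt.fun_sum fun i _ => HasDerivAt.fun_sum fun j _ => (hF j i).const_mul (x i j)

theorem HasDerivAt.eq_zero_of_forall_Ici_eq {E : Type*} [NormedAddCommGroup E] [NormedSpace ℝ E]
    {g : ℝ → E} {c : E} (hg : HasDerivAt g c 0) (hconst : ∀ t, 0 ≤ t → g t = g 0) : c = 0 :=
  (uniqueDiffOn_Ici 0 0 Set.self_mem_Ici).eq_deriv _ hg.hasDerivWithinAt
    ((hasDerivWithinAt_const 0 _ (g 0)).congr hconst rfl)

theorem HasDerivAt.nonneg_of_forall_Ici_nonneg {g : ℝ → ℝ} {c : ℝ} (hg : HasDerivAt g c 0)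
    (hg0 : g 0 = 0) (hnonneg : ∀ t, 0 ≤ t → 0 ≤ g t) : 0 ≤ c := by
  have hslope : Filter.Tendsto (slope g 0) (nhdsWithin 0 (Set.Ioi 0)) (nhds c) :=
    (hasDerivAt_iff_tendsto_slope.mp hg).mono_left
      (nhdsWithin_mono _ fun t (ht : 0 < t) => ht.ne')
  refine ge_of_tendsto hslope ?_
  filter_upwards [self_mem_nhdsWithin] with t (ht : 0 < t)
  rw [slope_def_field, hg0, sub_zero, sub_zero]
  exact div_nonneg (hnonneg t ht.le) ht.le

open scoped MatrixOrder in
theorem Matrix.PosSemidef.re_trace_mul_nonneg [DecidableEq m] {A B : Matrix m m ℂ}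
    (hA : A.PosSemidef) (hB : B.PosSemidef) : 0 ≤ (A * B).trace.re := by
  set S := CFC.sqrt A
  have hS : S.IsHermitian := (CFC.sqrt_nonneg A).posSemidef.isHermitian
  have htrace : (A * B).trace = (S * B * S).trace := by
    rw [← CFC.sqrt_mul_sqrt_self A hA.nonneg, Matrix.mul_assoc, trace_mul_comm, Matrix.mul_assoc]
  have hSBS : (S * B * S).PosSemidef := by
    simpa only [hS.eq] using hB.mul_mul_conjTranspose_same S
  rw [htrace]
  exact (Complex.le_def.mp hSBS.trace_nonneg).1

section Generator

variable {P : ℝ → Matrix m m ℂ →ₗ[ℂ] Matrix m m ℂ} {L : Matrix m m ℂ →ₗ[ℂ] Matrix m m ℂ}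

theorem trace_generator_eq_zero [DecidableEq m]
    (hL : ∀ x i j, HasDerivAt (fun u => P u x i j) (L x i j) 0) (hP0 : P 0 = LinearMap.id)
    (hPtr : ∀ t, 0 ≤ t → ∀ x, (P t x).trace = x.trace)
    (x : Matrix m m ℂ) : (L x).trace = 0 := by
  have hd := hasDerivAt_trace_mul (hL x) 1
  simp only [Matrix.one_mul] at hd
  exact hd.eq_zero_of_forall_Ici_eq fun t ht => by rw [hPtr t ht, hP0, LinearMap.id_apply]

theorem trace_generator_mul_comm
    (hL : ∀ x i j, HasDerivAt (fun u => P u x i j) (L x i j) 0)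
    (hPsym : ∀ t, 0 ≤ t → ∀ x y, (P t x * y).trace = (x * P t y).trace) (x y : Matrix m m ℂ) :
    (L x * y).trace = (x * L y).trace := by
  have hd := (hasDerivAt_trace_mul (hL y) x).fun_sub (hasDerivAt_trace_mul (hL x) y)
  rw [trace_mul_comm]
  refine (sub_eq_zero.mp (hd.eq_zero_of_forall_Ici_eq fun t ht => ?_)).symm
  rw [trace_mul_comm y, hPsym t ht, trace_mul_comm y, hPsym 0 le_rfl, sub_self, sub_self]

theorem re_trace_mul_generator_nonneg [DecidableEq m]
    (hL : ∀ x i j, HasDerivAt (fun u => P u x i j) (L x i j) 0) (hP0 : P 0 = LinearMap.id)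
    (hPpos : ∀ t, 0 ≤ t → ∀ x, x.PosSemidef → (P t x).PosSemidef)
    {x y : Matrix m m ℂ} (hx : x.PosSemidef) (hy : y.PosSemidef) (hxy : x * y = 0) :
    0 ≤ (x * L y).trace.re := by
  have hd := (Complex.reCLM.hasFDerivAt.comp_hasDerivAt 0 (hasDerivAt_trace_mul (hL y) x))
  refine hd.nonneg_of_forall_Ici_nonneg ?_ fun t ht => hx.re_trace_mul_nonneg (hPpos t ht y hy)
  simp [hP0, hxy]

end Generator

namespace Matrix.IsHermitian

variable [DecidableEq m] {A : Matrix m m ℂ} (hA : A.IsHermitian)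

def spectralProj (k : m) : Matrix m m ℂ :=
  Unitary.conjStarAlgAut ℂ _ hA.eigenvectorUnitary (single k k 1)

theorem spectralProj_posSemidef (k : m) : (hA.spectralProj k).PosSemidef := by
  have hE : (single k k 1 : Matrix m m ℂ).PosSemidef := by
    rw [← diagonal_single]
    exact posSemidef_diagonal_iff.mpr fun i => by by_cases h : i = k <;> simp [h]
  simpa [spectralProj, ← star_eq_conjTranspose] using
    hE.mul_mul_conjTranspose_same (hA.eigenvectorUnitary : Matrix m m ℂ)

theorem spectralProj_mul_spectralProj_of_ne {k l : m} (hkl : k ≠ l) :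
    hA.spectralProj k * hA.spectralProj l = 0 := by
  rw [spectralProj, spectralProj, ← map_mul, single_mul_single_of_ne (1 : ℂ) k k l hkl, map_zero]

theorem sum_spectralProj : ∑ k, hA.spectralProj k = 1 := by
  simp only [spectralProj]
  rw [← map_sum, sum_single_one, map_one]

theorem cfc_eq_sum_smul_spectralProj (g : ℝ → ℝ) :
    cfc g A = ∑ k, (g (hA.eigenvalues k) : ℂ) • hA.spectralProj k := by
  rw [hA.cfc_eq, IsHermitian.cfc, ← sum_single_eq_diagonal]
  simp_rw [spectralProj, ← map_smul, smul_single, smul_eq_mul, mul_one, map_sum]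
  rfl

end Matrix.IsHermitian

section ResolutionOfIdentity

variable {ι : Type*} [Fintype ι] {p : ι → Matrix m m ℂ} {L : Matrix m m ℂ →ₗ[ℂ] Matrix m m ℂ}

theorem re_trace_sum_smul_mul_map_sum_smul (a b : ι → ℝ) :
    ((∑ k, (a k : ℂ) • p k) * L (∑ l, (b l : ℂ) • p l)).trace.re
      = ∑ k, ∑ l, (p k * L (p l)).trace.re * (a k * b l) := by
  simp only [map_sum, map_smul, Finset.sum_mul_sum, smul_mul_smul_comm, trace_sum, trace_smul,
    smul_eq_mul, Complex.re_sum, ← Complex.ofReal_mul, Complex.re_ofReal_mul, mul_comm]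

theorem neg_mul_re_trace_le_of_forall_mul_sub_mul_sub_le [DecidableEq m]
    (hp_psd : ∀ k, (p k).PosSemidef) (hp_orth : ∀ k l, k ≠ l → p k * p l = 0)
    (hp_sum : ∑ k, p k = 1) (hLtr : ∀ x, (L x).trace = 0)
    (hLsym : ∀ x y, (L x * y).trace = (x * L y).trace)
    (hLpos : ∀ x y, x.PosSemidef → y.PosSemidef → x * y = 0 → 0 ≤ (x * L y).trace.re)
    (β : ℝ) (a b u v : ι → ℝ)
    (h : ∀ k l, β * ((a k - a l) * (b k - b l)) ≤ (u k - u l) * (v k - v l)) :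
    -β * ((∑ k, (a k : ℂ) • p k) * L (∑ l, (b l : ℂ) • p l)).trace.re
      ≤ -((∑ k, (u k : ℂ) • p k) * L (∑ l, (v l : ℂ) • p l)).trace.re := by
  set c : ι → ι → ℝ := fun k l => (p k * L (p l)).trace.re
  have hsymm (k l : ι) : c k l = c l k := by
    simp only [c]
    rw [trace_mul_comm (p l), hLsym]
  have hrow (k : ι) : ∑ l, c k l = 0 := by
    simp only [hsymm k, c]
    rw [← Complex.re_sum, ← trace_sum, ← Finset.sum_mul, hp_sum, Matrix.one_mul, hLtr,
      Complex.zero_re]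
  have hcomp : β * ∑ k, ∑ l, c k l * ((a k - a l) * (b k - b l))
      ≤ ∑ k, ∑ l, c k l * ((u k - u l) * (v k - v l)) := by
    simp only [Finset.mul_sum]
    refine Finset.sum_le_sum fun k _ => Finset.sum_le_sum fun l _ => ?_
    rw [mul_left_comm]
    obtain rfl | hkl := eq_or_ne k l
    · simp
    · exact mul_le_mul_of_nonneg_left (h k l) (hLpos _ _ (hp_psd k) (hp_psd l) (hp_orth k l hkl))
  rw [re_trace_sum_smul_mul_map_sum_smul, re_trace_sum_smul_mul_map_sum_smul,
    sum_sum_mul_eq_neg_half_sum_sum_mul_sub_mul_sub c a b hsymm hrow,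
    sum_sum_mul_eq_neg_half_sum_sum_mul_sub_mul_sub c u v hsymm hrow]
  linarith

end ResolutionOfIdentity

theorem Matrix.IsHermitian.neg_mul_re_trace_cfc_mul_le [DecidableEq m] {A : Matrix m m ℂ}
    (hA : A.IsHermitian) {L : Matrix m m ℂ →ₗ[ℂ] Matrix m m ℂ} (hLtr : ∀ x, (L x).trace = 0)
    (hLsym : ∀ x y, (L x * y).trace = (x * L y).trace)
    (hLpos : ∀ x y, x.PosSemidef → y.PosSemidef → x * y = 0 → 0 ≤ (x * L y).trace.re)
    (β : ℝ) (g₁ g₂ h₁ h₂ : ℝ → ℝ)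
    (h : ∀ x ∈ spectrum ℝ A, ∀ y ∈ spectrum ℝ A,
      β * ((g₁ x - g₁ y) * (g₂ x - g₂ y)) ≤ (h₁ x - h₁ y) * (h₂ x - h₂ y)) :
    -β * (cfc g₁ A * L (cfc g₂ A)).trace.re ≤ -(cfc h₁ A * L (cfc h₂ A)).trace.re := by
  simp only [hA.cfc_eq_sum_smul_spectralProj]
  exact neg_mul_re_trace_le_of_forall_mul_sub_mul_sub_le hA.spectralProj_posSemidef
    (fun k l => hA.spectralProj_mul_spectralProj_of_ne) hA.sum_spectralProj hLtr hLsym hLpos β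
    _ _ _ _ fun k l =>
      h _ (hA.eigenvalues_mem_spectrum_real k) _ (hA.eigenvalues_mem_spectrum_real l)

theorem trace_WRC_general (n : ℕ)
    (P : ℝ → (Matrix (Fin n) (Fin n) ℂ →ₗ[ℂ] Matrix (Fin n) (Fin n) ℂ))
    (L : Matrix (Fin n) (Fin n) ℂ →ₗ[ℂ] Matrix (Fin n) (Fin n) ℂ)
    (hP0 : P 0 = LinearMap.id)
    (hPpos : ∀ t : ℝ, 0 ≤ t → ∀ x : Matrix (Fin n) (Fin n) ℂ,
      x.PosSemidef → (P t x).PosSemidef)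
    (hPtr : ∀ t : ℝ, 0 ≤ t → ∀ x : Matrix (Fin n) (Fin n) ℂ, (P t x).trace = x.trace)
    (hPsym : ∀ t : ℝ, 0 ≤ t → ∀ x y : Matrix (Fin n) (Fin n) ℂ,
      (P t x * y).trace = (x * P t y).trace)
    (hgen : ∀ (x : Matrix (Fin n) (Fin n) ℂ) (t : ℝ) (i j : Fin n),
      HasDerivAt (fun u => P u x i j) ((L (P t x)) i j) t) :
    ∀ f : Matrix (Fin n) (Fin n) ℂ, f.PosDef →
      -(4 : ℝ) * ((rpowM f (1 / 2) * L (rpowM f (1 / 2))).trace).re ≤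
        -((logM f * L f).trace).re := by
  intro f hf
  have hL (x : Matrix (Fin n) (Fin n) ℂ) (i j : Fin n) :
      HasDerivAt (fun u => P u x i j) (L x i j) 0 := by
    simpa [hP0] using hgen x 0 i j
  have hspec_pos : ∀ x ∈ spectrum ℝ f, 0 < x := by
    rw [hf.isHermitian.spectrum_real_eq_range_eigenvalues]
    rintro _ ⟨k, rfl⟩
    exact hf.eigenvalues_pos k
  have key := hf.isHermitian.neg_mul_re_trace_cfc_mul_le (trace_generator_eq_zero hL hP0 hPtr)
    (trace_generator_mul_comm hL hPsym) (fun _ _ => re_trace_mul_generator_nonneg hL hP0 hPpos)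
    4 (· ^ (1 / 2 : ℝ)) (· ^ (1 / 2 : ℝ)) Real.log id fun x hx y hy => by
      have := four_mul_sqrt_sub_sqrt_sq_le (hspec_pos x hx) (hspec_pos y hy)
      rwa [Real.sqrt_eq_rpow, Real.sqrt_eq_rpow, sq] at this
  rwa [cfc_id ℝ f hf.isHermitian.isSelfAdjoint] at key

/-- Standard weak regularity condition (WRC, `β = 4`) in the trace case:
`−4·tr(f^{1/2} L(f^{1/2})) ≤ −tr((log f)·L f)` for `f > 0`. -/
theorem trace_WRC (n : ℕ)
    (P : ℝ → (Matrix (Fin n) (Fin n) ℂ →ₗ[ℂ] Matrix (Fin n) (Fin n) ℂ))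
    (L : Matrix (Fin n) (Fin n) ℂ →ₗ[ℂ] Matrix (Fin n) (Fin n) ℂ)
    (hP0 : P 0 = LinearMap.id)
    (hPsg : ∀ s t : ℝ, 0 ≤ s → 0 ≤ t → P (s + t) = (P s).comp (P t))
    (hPpos : ∀ t : ℝ, 0 ≤ t → ∀ x : Matrix (Fin n) (Fin n) ℂ,
      x.PosSemidef → (P t x).PosSemidef)
    (hPtr : ∀ t : ℝ, 0 ≤ t → ∀ x : Matrix (Fin n) (Fin n) ℂ, (P t x).trace = x.trace)
    (hPsym : ∀ t : ℝ, 0 ≤ t → ∀ x y : Matrix (Fin n) (Fin n) ℂ,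
      (P t x * y).trace = (x * P t y).trace)
    (hgen : ∀ (x : Matrix (Fin n) (Fin n) ℂ) (t : ℝ) (i j : Fin n),
      HasDerivAt (fun u => P u x i j) ((L (P t x)) i j) t) :
    ∀ f : Matrix (Fin n) (Fin n) ℂ, f.PosDef →
      -(4 : ℝ) * ((rpowM f (1 / 2) * L (rpowM f (1 / 2))).trace).re ≤
        -((logM f * L f).trace).re :=
  trace_WRC_general n P L hP0 hPpos hPtr hPsym hgen

end
end
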